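/- Let $B\in\mathbb{R}^{m\times m}$ be symmetric and define $\mathcal{A}(X) = X\left(\tfrac{3}{2}I_s - \tfrac{1}{2}X^\top B X\right)$ on $\mathbb{R}^{m\times s}$. If $X^\top B X = I_s$, then $\mathcal{A}(X)=X$, and for every $D\in\mathbb{R}^{m\times s}$, $\frac{d}{dt}\big|_{t=0}\left[\mathcal{A}(X+tD)^\top B\, \mathcal{A}(X+tD)\right] = 0$. -/

import Mathlib

/-!
At a point with `XᵀBX = I` the operator is the identity, and its differential there is
`D ↦ D - ½ X S`, where `S = DᵀBX + XᵀBD` is the differential of the constraint `X ↦ XᵀBX`.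
By the chain rule the derivative of the constraint along `t ↦ 𝒜(X + tD)` is therefore
`S - ½ (SᵀXᵀBX + XᵀBX S) = S - ½ (Sᵀ + S)`, which vanishes because `S` is symmetric when `B` is.
-/

open Matrix

/-- The constraint dissolving operator for the generalized Stiefel manifold
`{X : XᵀBX = Iₛ}`: `𝒜(X) = X (3/2 Iₛ - 1/2 XᵀBX)`. -/
noncomputable def genStiefelCDO {m s : ℕ} (B : Matrix (Fin m) (Fin m) ℝ)
    (X : Matrix (Fin m) (Fin s) ℝ) : Matrix (Fin m) (Fin s) ℝ :=
  X * ((3 / 2 : ℝ) • (1 : Matrix (Fin s) (Fin s) ℝ) - (1 / 2 : ℝ) • (Xᵀ * B * X))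

section ConstraintDeriv

variable {R l n : Type*} [CommRing R] [Fintype l] {B : Matrix l l R} {X : Matrix l n R}

def genStiefelConstraintDeriv (B : Matrix l l R) (X D : Matrix l n R) : Matrix n n R :=
  Dᵀ * B * X + Xᵀ * B * D

theorem genStiefelConstraintDeriv_transpose (hB : Bᵀ = B) (D : Matrix l n R) :
    (genStiefelConstraintDeriv B X D)ᵀ = genStiefelConstraintDeriv B X D := by
  simp only [genStiefelConstraintDeriv, transpose_add, transpose_mul, transpose_transpose, hB,
    Matrix.mul_assoc]
  exact add_comm _ _

theorem genStiefelConstraintDeriv_mul_right [Fintype n] [DecidableEq n] (hX : Xᵀ * B * X = 1)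
    (S : Matrix n n R) : genStiefelConstraintDeriv B X (X * S) = Sᵀ + S := by
  rw [genStiefelConstraintDeriv, transpose_mul, Matrix.mul_assoc, Matrix.mul_assoc,
    ← Matrix.mul_assoc Xᵀ, hX, Matrix.mul_one, ← Matrix.mul_assoc, hX, Matrix.one_mul]

end ConstraintDeriv

-- Any norm will do: in finite dimension `HasDerivAt` does not depend on the choice.
attribute [local instance] Matrix.normedAddCommGroup Matrix.normedSpace

section MatrixCurves

variable {𝕜 : Type*} [NontriviallyNormedField 𝕜] {l n p : Type*} [Fintype l] [Fintype n]
  [Fintype p] {t : 𝕜}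

theorem HasDerivAt.matrix_mul [CompleteSpace 𝕜] {F : 𝕜 → Matrix l n 𝕜} {G : 𝕜 → Matrix n p 𝕜}
    {F' : Matrix l n 𝕜} {G' : Matrix n p 𝕜} (hF : HasDerivAt F F' t) (hG : HasDerivAt G G' t) :
    HasDerivAt (fun s => F s * G s) (F' * G t + F t * G') t := by
  have h : HasDerivAt (fun s => F s * G s) (F t * G' + F' * G t) t :=
    (mulLinearMap 𝕜 (A := 𝕜)).toContinuousBilinearMap.hasDerivAt_of_bilinear
      (fun _ => hF) (fun _ => hG)
  rwa [add_comm] at h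

theorem HasDerivAt.matrix_transpose {F : 𝕜 → Matrix l n 𝕜} {F' : Matrix l n 𝕜}
    (hF : HasDerivAt F F' t) : HasDerivAt (fun s => (F s)ᵀ) F'ᵀ t :=
  hasDerivAt_pi.2 fun i => hasDerivAt_pi.2 fun j => hasDerivAt_pi.1 (hasDerivAt_pi.1 hF j) i

theorem HasDerivAt.matrix_transpose_mul_mul [CompleteSpace 𝕜] {P : 𝕜 → Matrix n p 𝕜}
    {P' : Matrix n p 𝕜} (B : Matrix n n 𝕜) (hP : HasDerivAt P P' t) :
    HasDerivAt (fun s => (P s)ᵀ * B * P s) (genStiefelConstraintDeriv B (P t) P') t := by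
  simpa [genStiefelConstraintDeriv] using
    (hP.matrix_transpose.matrix_mul (hasDerivAt_const t B)).matrix_mul hP

end MatrixCurves

theorem genStiefelConstraintDeriv_sub_half_smul_mul_self {l n : Type*} [Fintype l] [Fintype n]
    [DecidableEq n] {B : Matrix l l ℝ} (hB : Bᵀ = B) {X : Matrix l n ℝ} (hX : Xᵀ * B * X = 1)
    (D : Matrix l n ℝ) :
    genStiefelConstraintDeriv B X (D - (1 / 2 : ℝ) • (X * genStiefelConstraintDeriv B X D)) =
      0 := by
  set S := genStiefelConstraintDeriv B X D
  calc genStiefelConstraintDeriv B X (D - (1 / 2 : ℝ) • (X * S))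
      = S - (1 / 2 : ℝ) • genStiefelConstraintDeriv B X (X * S) := by
        simp only [S, genStiefelConstraintDeriv, transpose_sub, transpose_smul, Matrix.sub_mul,
          Matrix.mul_sub, Matrix.smul_mul, Matrix.mul_smul, smul_add]
        abel
    _ = 0 := by
        rw [genStiefelConstraintDeriv_mul_right hX, genStiefelConstraintDeriv_transpose hB]
        module

theorem three_halves_smul_one_sub_half_smul_one {n : Type*} [DecidableEq n] :
    (3 / 2 : ℝ) • (1 : Matrix n n ℝ) - (1 / 2 : ℝ) • 1 = 1 := by
  rw [← sub_smul]
  norm_num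

theorem genStiefelCDO_of_constraint {m s : ℕ} {B : Matrix (Fin m) (Fin m) ℝ}
    {X : Matrix (Fin m) (Fin s) ℝ} (hX : Xᵀ * B * X = 1) : genStiefelCDO B X = X := by
  rw [genStiefelCDO, hX, three_halves_smul_one_sub_half_smul_one, Matrix.mul_one]

theorem HasDerivAt.genStiefelCDO {m s : ℕ} (B : Matrix (Fin m) (Fin m) ℝ)
    {P : ℝ → Matrix (Fin m) (Fin s) ℝ} {P' : Matrix (Fin m) (Fin s) ℝ} {t : ℝ}
    (hP : HasDerivAt P P' t) :
    HasDerivAt (fun s => genStiefelCDO B (P s))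
      (P' * ((3 / 2 : ℝ) • 1 - (1 / 2 : ℝ) • ((P t)ᵀ * B * P t)) -
        (1 / 2 : ℝ) • (P t * genStiefelConstraintDeriv B (P t) P')) t := by
  have hInner := ((hP.matrix_transpose_mul_mul B).const_smul (1 / 2 : ℝ)).const_sub
    ((3 / 2 : ℝ) • (1 : Matrix (Fin s) (Fin s) ℝ))
  convert hP.matrix_mul hInner using 1
  · rfl
  · simp only [Pi.smul_apply, Matrix.mul_neg, Matrix.mul_smul, sub_eq_add_neg]

/-- for symmetric `B`, if `XᵀBX = Iₛ` then `𝒜(X) = X`, and the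
derivative `d/dt |_{t=0} (𝒜(X+tD)ᵀ B 𝒜(X+tD))` vanishes for every direction `D`. -/
theorem genStiefelCDO_fixes_and_constraint_derivative_vanishes {m s : ℕ}
    (B : Matrix (Fin m) (Fin m) ℝ) (hB : Bᵀ = B)
    (X : Matrix (Fin m) (Fin s) ℝ) (hX : Xᵀ * B * X = 1) :
    genStiefelCDO B X = X ∧
      ∀ D : Matrix (Fin m) (Fin s) ℝ, ∀ i j : Fin s,
        deriv (fun t : ℝ =>
          (((genStiefelCDO B (X + t • D))ᵀ * B * genStiefelCDO B (X + t • D) :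
            Matrix (Fin s) (Fin s) ℝ)) i j) 0 = 0 := by
  refine ⟨genStiefelCDO_of_constraint hX, fun D i j => ?_⟩
  have hLine : HasDerivAt (fun t : ℝ => X + t • D) D 0 := by
    have h := ((hasDerivAt_id (0 : ℝ)).smul_const D).const_add X
    rwa [one_smul] at h
  have hCDO := hLine.genStiefelCDO B
  rw [zero_smul, add_zero, hX, three_halves_smul_one_sub_half_smul_one, Matrix.mul_one] at hCDO
  have hConstraint := hCDO.matrix_transpose_mul_mul B
  rw [zero_smul, add_zero, genStiefelCDO_of_constraint hX,
    genStiefelConstraintDeriv_sub_half_smul_mul_self hB hX] at hConstraint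
  exact (hasDerivAt_pi.1 (hasDerivAt_pi.1 hConstraint i) j).deriv
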